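/- arXiv:1105.2181 — 2 statements merged into one kernel-verified Lean document; each statement's English description precedes it below -/
import Mathlib

section
/- Let M be a mixed abelian category and let f: X -> Y be a morphism in M. If the induced morphism gr_n f: gr_n X -> gr_n Y is zero for every integer n, then f = 0. -/
/-!
STATEMENT 2: In a mixed abelian category, if a morphism f : X ⟶ Y induces the zero
map gr_n f : gr_n X ⟶ gr_n Y on every graded piece of the weight filtration, then
f = 0.  The weight filtration is given as functorial data: subobject functors `W n`
with monomorphisms into the identity, exhaustive and separated, whose subquotients
have the correct weights, and graded pieces `G n` = (W n)/(W (n-1)).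
-/

open CategoryTheory Limits

universe v u

/-- `S` is a subquotient of `X` (for `S` simple, this says `S` is a composition factor). -/
def IsSubquotient {C : Type u} [Category.{v} C] (S X : C) : Prop :=
  ∃ (Y : C) (i : Y ⟶ X) (p : Y ⟶ S), Mono i ∧ Epi p

/-!
By induction on `n`, `W n` kills `f`. If `W (n-1)` and `G n` kill `f`, then `(W n).map f` factors
through a map `gr_n X ⟶ W (n-1) Y`, which vanishes because every composition factor of `gr_n X`
has weight `≥ n` while those of `W (n-1) Y` have weight `≤ n-1`. The lower bound holds for the
simple subobjects of `gr_n X` by maximality of `W (n-1) X`, and mixedness spreads it to all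
composition factors: for a minimal subobject `A` with a simple quotient `S` of weight `< n`,
pushing `0 → ker → A → S → 0` out along a simple quotient `T` of the kernel gives an extension of
`S` by `T`; it splits, so a smaller subobject of `A` still maps onto `S`.
-/

open Opposite

lemma IsSubquotient.of_mono {C : Type u} [Category.{v} C] {X Y : C} (i : Y ⟶ X) [Mono i] :
    IsSubquotient Y X :=
  ⟨Y, i, 𝟙 Y, inferInstance, inferInstance⟩

lemma IsSubquotient.of_epi {C : Type u} [Category.{v} C] {X Y : C} (p : X ⟶ Y) [Epi p] :
    IsSubquotient Y X :=
  ⟨X, 𝟙 X, p, inferInstance, inferInstance⟩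

section Abelian

variable {C : Type u} [Category.{v} C] [Abelian C]

lemma simple_unop {Y : Cᵒᵖ} [Simple Y] : Simple (unop Y) :=
  simple_of_cosimple _ fun f _ => by
    rw [← isIso_op_iff, Simple.mono_isIso_iff_nonzero f.op, Ne, Ne, ← op_zero,
      Quiver.Hom.op_inj.eq_iff]

instance isArtinianObject_op (X : C) [IsNoetherianObject X] : IsArtinianObject (op X) :=
  ⟨(Abelian.subobjectIsoSubobjectOp X).symm.strictMono.wellFoundedGT⟩

lemma exists_simple_quotient {X : C} [IsNoetherianObject X] (h : ¬IsZero X) :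
    ∃ (S : C) (e : X ⟶ S), Simple S ∧ Epi e := by
  obtain ⟨S, hS⟩ := exists_simple_subobject (X := op X) fun h' => h h'.unop
  exact ⟨unop (S : Cᵒᵖ), S.arrow.unop, simple_unop, inferInstance⟩

lemma IsSubquotient.trans {S Y X : C} (h₁ : IsSubquotient S Y) (h₂ : IsSubquotient Y X) :
    IsSubquotient S X := by
  obtain ⟨Y', i, p, _, _⟩ := h₂
  obtain ⟨S', j, q, _, _⟩ := h₁
  exact ⟨pullback j p, pullback.snd j p ≫ i, pullback.fst j p ≫ q, inferInstance,
    inferInstance⟩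

lemma IsSubquotient.kernel_or_target {S E B : C} [Simple S] (e : E ⟶ B)
    (h : IsSubquotient S E) : IsSubquotient S (kernel e) ∨ IsSubquotient S B := by
  obtain ⟨E', c, q, _, _⟩ := h
  by_cases hq : kernel.ι (c ≫ e) ≫ q = 0
  · right
    have : Epi (cokernel.desc _ q hq) := epi_of_epi_fac (cokernel.π_desc _ q hq)
    exact (of_epi (cokernel.desc _ q hq)).trans (of_mono (Abelian.factorThruCoimage (c ≫ e)))
  · left
    have : Epi (kernel.ι (c ≫ e) ≫ q) := epi_of_nonzero_to_simple hq
    have : Mono (kernel.lift e (kernel.ι (c ≫ e) ≫ c) (by simp)) :=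
      mono_of_mono_fac (kernel.lift_ι _ _ _)
    exact ⟨kernel (c ≫ e), _, kernel.ι (c ≫ e) ≫ q, this, inferInstance⟩

lemma nonempty_iso_of_isSubquotient {S V : C} [Simple S] [Simple V] (h : IsSubquotient S V) :
    Nonempty (S ≅ V) := by
  obtain ⟨V', c, q, _, _⟩ := h
  have hq : q ≠ 0 := fun hq => Simple.not_isZero S (IsZero.of_epi_eq_zero q hq)
  have : IsIso c := isIso_of_mono_of_nonzero fun hc =>
    hq ((IsZero.of_mono_eq_zero c hc).eq_of_src _ _)
  have : IsIso (inv c ≫ q) := isIso_of_epi_of_nonzero fun h => hq (by simpa using c ≫= h)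
  exact ⟨(asIso (inv c ≫ q)).symm⟩

namespace CategoryTheory

lemma ShortComplex.ShortExact.pushout {s : ShortComplex C} (hs : s.ShortExact) {T : C}
    (t : s.X₁ ⟶ T) :
    (ShortComplex.mk (pushout.inr s.f t) (pushout.desc s.g 0 (by simp))
      (pushout.inr_desc _ _ _)).ShortExact := by
  have := hs.mono_f
  have := hs.epi_g
  refine { exact := ?_, mono_f := inferInstance, epi_g := epi_of_epi_fac (pushout.inl_desc _ _ _) }
  rw [ShortComplex.exact_iff_exact_up_to_refinements]
  intro A x hx
  obtain ⟨A', π, _, y, z, hyz⟩ := (IsPushout.of_hasPushout s.f t).hom_eq_add_up_to_refinements x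
  have hy : y ≫ s.g = 0 := by
    have hx' : x ≫ pushout.desc s.g 0 (by simp) = 0 := hx
    have := hyz =≫ pushout.desc s.g 0 (by simp)
    simp only [Category.assoc, Preadditive.add_comp, pushout.inl_desc, pushout.inr_desc, hx',
      comp_zero, add_zero] at this
    exact this.symm
  refine ⟨A', π, inferInstance, hs.exact.lift y hy ≫ t + z, ?_⟩
  simp [hyz, ← pushout.condition, reassoc_of% (hs.exact.lift_f y hy)]

lemma ShortComplex.Hom.τ₂_eq_zero {s₁ s₂ : ShortComplex C} (h₁ : s₁.ShortExact)
    (h₂ : s₂.ShortExact) (φ : s₁ ⟶ s₂) (hτ₁ : φ.τ₁ = 0) (hτ₃ : φ.τ₃ = 0)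
    (hzero : ∀ k : s₁.X₃ ⟶ s₂.X₁, k = 0) : φ.τ₂ = 0 := by
  have := h₂.mono_f
  have := h₁.epi_g
  have hg : φ.τ₂ ≫ s₂.g = 0 := by rw [φ.comm₂₃, hτ₃, comp_zero]
  have hf : s₁.f ≫ h₂.exact.lift φ.τ₂ hg = 0 := by
    rw [← cancel_mono s₂.f, Category.assoc, h₂.exact.lift_f, ← φ.comm₁₂, hτ₁, zero_comp]
  rw [← h₂.exact.lift_f φ.τ₂ hg, ← h₁.exact.g_desc _ hf, hzero (h₁.exact.desc _ hf), comp_zero,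
    zero_comp]

end CategoryTheory

end Abelian

section Weights

variable {C : Type u} [Category.{v} C] [Abelian C] (wt : C → ℤ)

def WeightsLE (n : ℤ) (X : C) : Prop :=
  ∀ S : C, Simple S → IsSubquotient S X → wt S ≤ n

def WeightsGE (n : ℤ) (X : C) : Prop :=
  ∀ S : C, Simple S → IsSubquotient S X → n ≤ wt S

/-- `Ext¹(L, L') = 0` for simple `L`, `L'` with `wt L ≤ wt L'`. -/
def MixedWeights : Prop :=
  ∀ (L L' : C), Simple L → Simple L' → wt L ≤ wt L' →
    ∀ (E : C) (f : L' ⟶ E) (g : E ⟶ L) (zero : f ≫ g = 0),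
      (ShortComplex.mk f g zero).ShortExact → Nonempty (ShortComplex.mk f g zero).Splitting

variable {wt}

lemma eq_zero_of_weightsGE_of_weightsLE {m n : ℤ} (hmn : m < n) {A B : C} [IsArtinianObject B]
    (hA : WeightsGE wt n A) (hB : WeightsLE wt m B) (f : A ⟶ B) : f = 0 := by
  by_contra hf
  have hI : ¬IsZero (Abelian.image f) := fun h =>
    hf (by rw [← Abelian.image.fac f, h.eq_of_src (Abelian.image.ι f) 0, comp_zero])
  have := isArtinianObject_of_mono (Abelian.image.ι f)
  obtain ⟨S, hS⟩ := exists_simple_subobject hI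
  have h₁ := hA S hS
    ((IsSubquotient.of_mono (S.arrow : (S : C) ⟶ _)).trans (.of_epi (Abelian.factorThruImage f)))
  have h₂ := hB S hS (.of_mono (S.arrow ≫ Abelian.image.ι f))
  omega

lemma lt_wt_of_mono_of_largest_weightsLE
    (hwt : ∀ L L' : C, Simple L → Simple L' → Nonempty (L ≅ L') → wt L = wt L')
    {m : ℤ} {s : ShortComplex C} (hs : s.ShortExact) (hX₁ : WeightsLE wt m s.X₁)
    (hmax : ∀ (Y : C) (f : Y ⟶ s.X₂), Mono f → WeightsLE wt m Y → ∃ g : Y ⟶ s.X₁, g ≫ s.f = f)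
    {V : C} [Simple V] (v : V ⟶ s.X₃) [Mono v] : m < wt V := by
  by_contra! hV
  have := hs.mono_f
  have := hs.epi_g
  have hP : WeightsLE wt m (pullback v s.g) := by
    intro S hS hSP
    rcases hSP.kernel_or_target (pullback.fst v s.g) with hK | hSV
    · have hk : (kernel.ι (pullback.fst v s.g) ≫ pullback.snd v s.g) ≫ s.g = 0 := by
        simp [← pullback.condition]
      have : Mono (hs.exact.lift _ hk) := mono_of_mono_fac (hs.exact.lift_f _ hk)
      exact hX₁ S hS (hK.trans (.of_mono (hs.exact.lift _ hk)))
    · obtain ⟨e⟩ := nonempty_iso_of_isSubquotient hSV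
      rw [hwt S V hS inferInstance ⟨e⟩]
      exact hV
  obtain ⟨g, hg⟩ := hmax _ (pullback.snd v s.g) inferInstance hP
  have hv : pullback.fst v s.g ≫ v = 0 := by
    rw [pullback.condition, ← hg, Category.assoc, s.zero, comp_zero]
  exact Simple.not_isZero V (IsZero.of_epi_eq_zero _ (zero_of_comp_mono v hv))

lemma weightsGE_of_simple_subobjects (hmixed : MixedWeights wt) {n : ℤ} {B : C}
    [IsNoetherianObject B] [IsArtinianObject B]
    (hB : ∀ V : C, Simple V → ∀ v : V ⟶ B, Mono v → n ≤ wt V) : WeightsGE wt n B := by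
  suffices H : ∀ (A : Subobject B) (S : C), Simple S → ∀ e : (A : C) ⟶ S, Epi e → n ≤ wt S by
    rintro S hS ⟨A, i, e, _, _⟩
    exact H (Subobject.mk i) S hS ((Subobject.underlyingIso i).hom ≫ e) inferInstance
  intro A
  induction A using WellFoundedLT.induction with
  | ind A ih =>
  have ih' : ∀ {P : C} (m : P ⟶ A) [Mono m], ¬IsIso m →
      ∀ S : C, Simple S → ∀ e : P ⟶ S, Epi e → n ≤ wt S := by
    intro P m _ hm S hS e _
    refine ih _ ?_ S hS ((Subobject.underlyingIso (m ≫ A.arrow)).hom ≫ e) inferInstance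
    simpa only [Subobject.mk_arrow] using Subobject.mk_lt_mk_of_comm (i₂ := A.arrow) m rfl hm
  intro S hS e _
  by_contra! hlt
  by_cases hK : IsZero (kernel e)
  · have := Preadditive.mono_of_isZero_kernel e hK
    have := isIso_of_mono_of_epi e
    exact hlt.not_ge (hB S hS (inv e ≫ A.arrow) inferInstance)
  have := isNoetherianObject_of_mono (kernel.ι e ≫ A.arrow)
  obtain ⟨T, t, hT, _⟩ := exists_simple_quotient hK
  have hwT : n ≤ wt T := by
    refine ih' (kernel.ι e) (fun _ => ?_) T hT t inferInstance
    exact Simple.not_isZero S (IsZero.of_epi_eq_zero e ((cancel_epi (kernel.ι e)).1 (by simp)))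
  let s := ShortComplex.mk (kernel.ι e) e (kernel.condition e)
  have hs : s.ShortExact := { exact := s.exact_of_f_is_kernel (kernelIsKernel e) }
  obtain ⟨spl⟩ := hmixed S T hS hT (by omega) _ (pushout.inr (kernel.ι e) t)
    (pushout.desc e 0 (by simp)) (pushout.inr_desc _ _ _) (hs.pushout t)
  have : Mono spl.s := mono_of_mono_fac spl.s_g
  refine hlt.not_ge (ih' (pullback.snd spl.s (pushout.inl (kernel.ι e) t)) (fun _ => ?_) S hS
    (pullback.fst _ _) inferInstance)
  have hr : pushout.inl (kernel.ι e) t ≫ spl.r = 0 := by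
    rw [← IsIso.inv_hom_id_assoc (pullback.snd spl.s (pushout.inl (kernel.ι e) t))
      (pushout.inl (kernel.ι e) t ≫ spl.r), ← pullback.condition_assoc, spl.s_r]
    simp
  have ht : t = 0 := by
    calc t = t ≫ pushout.inr _ _ ≫ spl.r := by rw [spl.f_r, Category.comp_id]
      _ = 0 := by rw [← pushout.condition_assoc, hr]; exact comp_zero
  exact Simple.not_isZero T (IsZero.of_epi_eq_zero t ht)

end Weights

theorem stmt2 {C : Type u} [Category.{v} C] [Abelian C]
    -- finite length
    (_finLen : ∀ X : C, IsNoetherianObject X ∧ IsArtinianObject X)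
    (wt : C → ℤ)
    (_hwt : ∀ (L L' : C), Simple L → Simple L' → Nonempty (L ≅ L') → wt L = wt L')
    -- mixedness: Ext¹(L,L') = 0 if wt L' ≥ wt L
    (_hmixed : ∀ (L L' : C), Simple L → Simple L' → wt L ≤ wt L' →
      ∀ (E : C) (f : L' ⟶ E) (g : E ⟶ L) (zero : f ≫ g = 0),
        (ShortComplex.mk f g zero).ShortExact →
          Nonempty (ShortComplex.mk f g zero).Splitting)
    -- the weight filtration X ↦ W n X = X_{≤ n}, functorial in X
    (W : ℤ → C ⥤ C) (ι : ∀ n : ℤ, W n ⟶ 𝟭 C)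
    (_hmono : ∀ (n : ℤ) (X : C), Mono ((ι n).app X))
    (incl : ∀ n : ℤ, W (n - 1) ⟶ W n)
    (_hincl : ∀ n : ℤ, incl n ≫ ι n = ι (n - 1))
    -- exhaustive and separated
    (_hbdd : ∀ X : C, (∃ N : ℤ, ∀ m : ℤ, N ≤ m → IsIso ((ι m).app X)) ∧
      (∃ N : ℤ, ∀ m : ℤ, m ≤ N → IsZero ((W m).obj X)))
    -- W n X has weights ≤ n, and is the largest such subobject
    (_hwtle : ∀ (n : ℤ) (X S : C), Simple S → IsSubquotient S ((W n).obj X) → wt S ≤ n)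
    (_hlargest : ∀ (n : ℤ) (X Y : C) (f : Y ⟶ X), Mono f →
      (∀ S : C, Simple S → IsSubquotient S Y → wt S ≤ n) →
      ∃ g : Y ⟶ (W n).obj X, g ≫ (ι n).app X = f)
    -- graded pieces: gr_n X = (W n X)/(W (n-1) X), functorially
    (G : ℤ → C ⥤ C) (p : ∀ n : ℤ, W n ⟶ G n)
    (_hses : ∀ (n : ℤ) (X : C), ∃ zero : (incl n).app X ≫ (p n).app X = 0,
      (ShortComplex.mk ((incl n).app X) ((p n).app X) zero).ShortExact)
    {X Y : C} (f : X ⟶ Y) (hf : ∀ n : ℤ, (G n).map f = 0) :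
    f = 0 := by
  have hgr : ∀ n Z, WeightsGE wt n ((G n).obj Z) := fun n Z => by
    obtain ⟨_, hs⟩ := _hses n Z
    obtain ⟨_, _⟩ := _finLen ((G n).obj Z)
    refine weightsGE_of_simple_subobjects _hmixed fun V _ v _ =>
      Int.sub_one_lt_iff.mp (lt_wt_of_mono_of_largest_weightsLE _hwt hs (_hwtle (n - 1) Z) ?_ v)
    intro T j _ hT
    have := _hmono n Z
    obtain ⟨g, hg⟩ := _hlargest (n - 1) Z T (j ≫ (ι n).app Z) inferInstance hT
    refine ⟨g, (cancel_mono ((ι n).app Z)).1 ?_⟩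
    simpa [← _hincl n] using hg
  have hstep : ∀ n, (W (n - 1)).map f = 0 → (W n).map f = 0 := fun n hf' => by
    obtain ⟨_, hsX⟩ := _hses n X
    obtain ⟨_, hsY⟩ := _hses n Y
    have := (_finLen ((W (n - 1)).obj Y)).2
    exact ShortComplex.Hom.τ₂_eq_zero hsX hsY
      { τ₁ := (W (n - 1)).map f, τ₂ := (W n).map f, τ₃ := (G n).map f
        comm₁₂ := (incl n).naturality f, comm₂₃ := (p n).naturality f } hf' (hf n)
      (eq_zero_of_weightsGE_of_weightsLE (by omega) (hgr n X) (_hwtle (n - 1) Y))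
  obtain ⟨⟨N₁, hN₁⟩, ⟨N₀, hN₀⟩⟩ := _hbdd X
  have hW : ∀ n, N₀ ≤ n → (W n).map f = 0 := fun n hn => by
    induction n, hn using Int.leInduction with
    | base => exact (hN₀ N₀ le_rfl).eq_of_src _ _
    | succ k _ ih => exact hstep (k + 1) (by rwa [add_sub_cancel_right])
  have := hN₁ (max N₀ N₁) (le_max_right _ _)
  rw [← cancel_epi ((ι (max N₀ N₁)).app X), comp_zero]
  simpa [hW _ (le_max_left _ _)] using ((ι (max N₀ N₁)).naturality f).symm
end

section
/- Let D be a mixed triangulated category with heart M satisfying the strong mixedness condition, and suppose M contains a nonsplit short exact sequence 0 -> L' -> X -> L -> 0 of objects with L, L' simple and wt(L') != wt(L) - 1. Then the image of this sequence under the winnowing functor beta: M -> M^win splits. -/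
/-!
STATEMENT 5: Let β : M ⥤ M^win be the winnowing functor (exact, faithful, sending
simples to simples and preserving their weights), where the winnowed category M^win
satisfies the strong mixedness condition: Ext¹ between simple objects vanishes unless
their weights differ by exactly 1.  If 0 → L' → X → L → 0 is a nonsplit short exact
sequence in M with L, L' simple and wt L' ≠ wt L - 1, then its image under β splits.
-/

open CategoryTheory Limits

universe v u v' u'

theorem stmt5 {M : Type u} [Category.{v} M] [Abelian M]
    {W : Type u'} [Category.{v'} W] [Abelian W]
    (wtM : M → ℤ) (wtW : W → ℤ)
    (β : M ⥤ W) [β.Faithful]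
    -- β is exact
    (_hexact : ∀ (S : ShortComplex M), S.ShortExact →
      ∃ zero : β.map S.f ≫ β.map S.g = 0,
        (ShortComplex.mk (β.map S.f) (β.map S.g) zero).ShortExact)
    -- β sends simples to simples and preserves weights
    (_hsimple : ∀ L : M, Simple L → Simple (β.obj L))
    (_hwt : ∀ L : M, Simple L → wtW (β.obj L) = wtM L)
    -- strong mixedness of the winnowed category: Ext¹(L,L') = 0 unless wt L' = wt L - 1
    (_horlov : ∀ (L L' : W), Simple L → Simple L' → wtW L' ≠ wtW L - 1 →
      ∀ (E : W) (f : L' ⟶ E) (g : E ⟶ L) (zero : f ≫ g = 0),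
        (ShortComplex.mk f g zero).ShortExact →
          Nonempty (ShortComplex.mk f g zero).Splitting)
    -- a nonsplit short exact sequence 0 → L' → X → L → 0 with wt L' ≠ wt L - 1
    (L L' X : M) (_hL : Simple L) (_hL' : Simple L')
    (f : L' ⟶ X) (g : X ⟶ L) (zero : f ≫ g = 0)
    (_hses : (ShortComplex.mk f g zero).ShortExact)
    (_hnonsplit : IsEmpty (ShortComplex.mk f g zero).Splitting)
    (_hwts : wtM L' ≠ wtM L - 1) :
    -- the image 0 → β L' → β X → β L → 0 splits
    ∃ zero' : β.map f ≫ β.map g = 0,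
      Nonempty (ShortComplex.mk (β.map f) (β.map g) zero').Splitting := by
  obtain ⟨zero', hse⟩ := _hexact (ShortComplex.mk f g zero) _hses
  refine ⟨zero', _horlov (β.obj L) (β.obj L') (_hsimple L _hL) (_hsimple L' _hL') ?_
    (β.obj X) (β.map f) (β.map g) zero' hse⟩
  rw [_hwt L _hL, _hwt L' _hL']
  exact _hwts
end
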